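/- The Peskin 4-point IB kernel satisfies the partition-of-unity (zeroth moment) condition: for every r ∈ ℝ, the sum over all j ∈ ℤ of φ_IB4(r − j) equals 1 (the sum has only finitely many nonzero terms since φ_IB4 vanishes outside [−2,2]). -/
import Mathlib

/-- The Peskin 4-point immersed boundary kernel. -/
noncomputable def phiIB4 (r : ℝ) : ℝ :=
  if r ≤ -2 then 0
  else if r ≤ -1 then (5 + 2 * r - Real.sqrt (-7 - 12 * r - 4 * r ^ 2)) / 8
  else if r ≤ 0 then (3 + 2 * r + Real.sqrt (1 - 4 * r - 4 * r ^ 2)) / 8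
  else if r ≤ 1 then (3 - 2 * r + Real.sqrt (1 + 4 * r - 4 * r ^ 2)) / 8
  else if r ≤ 2 then (5 - 2 * r - Real.sqrt (-7 + 12 * r - 4 * r ^ 2)) / 8
  else 0

lemma phiIB4_zero_of (x : ℝ) (h : x ≤ -2 ∨ 2 ≤ x) : phiIB4 x = 0 := by
  unfold phiIB4
  rcases h with h | h
  · rw [if_pos h]
  · rw [if_neg (by linarith), if_neg (by linarith), if_neg (by linarith),
      if_neg (by linarith)]
    split_ifs with h2
    · have hx : x = 2 := le_antisymm h2 h
      subst hx
      rw [show (-7 + 12 * (2:ℝ) - 4 * 2 ^ 2) = 1 by norm_num, Real.sqrt_one]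
      norm_num
    · rfl

lemma sum4 (t : ℝ) (h0 : 0 ≤ t) (h1 : t < 1) :
    phiIB4 (t + 1) + phiIB4 t + phiIB4 (t - 1) + phiIB4 (t - 2) = 1 := by
  rcases eq_or_lt_of_le h0 with h | h
  · subst h
    norm_num [phiIB4]
  · set s := Real.sqrt (1 + 4 * t - 4 * t ^ 2) with hs
    have e1 : phiIB4 (t + 1) = (5 - 2 * (t + 1) - s) / 8 := by
      unfold phiIB4
      rw [if_neg (by linarith), if_neg (by linarith), if_neg (by linarith),
        if_neg (by linarith), if_pos (by linarith),
        show (-7 + 12 * (t + 1) - 4 * (t + 1) ^ 2) = 1 + 4 * t - 4 * t ^ 2 by ring]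
    have e2 : phiIB4 t = (3 - 2 * t + s) / 8 := by
      unfold phiIB4
      rw [if_neg (by linarith), if_neg (by linarith), if_neg (by linarith),
        if_pos (by linarith)]
    have e3 : phiIB4 (t - 1) = (3 + 2 * (t - 1) + s) / 8 := by
      unfold phiIB4
      rw [if_neg (by linarith), if_neg (by linarith), if_pos (by linarith),
        show (1 - 4 * (t - 1) - 4 * (t - 1) ^ 2) = 1 + 4 * t - 4 * t ^ 2 by ring]
    have e4 : phiIB4 (t - 2) = (5 + 2 * (t - 2) - s) / 8 := by
      unfold phiIB4
      rw [if_neg (by linarith), if_pos (by linarith),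
        show (-7 - 12 * (t - 2) - 4 * (t - 2) ^ 2) = 1 + 4 * t - 4 * t ^ 2 by ring]
    rw [e1, e2, e3, e4]; ring

/-- The Peskin 4-point IB kernel satisfies the partition-of-unity (zeroth moment)
condition: `∑_{j ∈ ℤ} φ_IB4(r - j) = 1` for every `r`. -/
theorem phiIB4_sum_eq_one : ∀ r : ℝ, ∑' j : ℤ, phiIB4 (r - j) = 1 := by
  intro r
  set n : ℤ := ⌊r⌋ with hn
  have h0 : (n : ℝ) ≤ r := Int.floor_le r
  have h1 : r < (n : ℝ) + 1 := Int.lt_floor_add_one r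
  have hfin : ∀ j : ℤ, j ∉ ({n - 1, n, n + 1, n + 2} : Finset ℤ) →
      phiIB4 (r - j) = 0 := by
    intro j hj
    simp only [Finset.mem_insert, Finset.mem_singleton] at hj
    push_neg at hj
    apply phiIB4_zero_of
    have hcase : j ≤ n - 2 ∨ n + 3 ≤ j := by omega
    rcases hcase with h | h
    · right
      have : (j : ℝ) ≤ (n : ℝ) - 2 := by exact_mod_cast h
      linarith
    · left
      have : (n : ℝ) + 3 ≤ (j : ℝ) := by exact_mod_cast h
      linarith
  rw [tsum_eq_sum hfin]
  have hsum : ∑ j ∈ ({n - 1, n, n + 1, n + 2} : Finset ℤ), phiIB4 (r - j)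
      = phiIB4 (r - ((n : ℝ) - 1)) + phiIB4 (r - n) + phiIB4 (r - ((n : ℝ) + 1))
        + phiIB4 (r - ((n : ℝ) + 2)) := by
    rw [Finset.sum_insert (by simp only [Finset.mem_insert, Finset.mem_singleton]; omega), Finset.sum_insert (by simp only [Finset.mem_insert, Finset.mem_singleton]; omega),
      Finset.sum_insert (by simp only [Finset.mem_insert, Finset.mem_singleton]; omega), Finset.sum_singleton]
    push_cast
    ring_nf
  rw [hsum]
  have key := sum4 (r - n) (by linarith) (by linarith)
  rw [show r - ((n : ℝ) - 1) = (r - n) + 1 by ring,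
    show r - ((n : ℝ) + 1) = (r - n) - 1 by ring,
    show r - ((n : ℝ) + 2) = (r - n) - 2 by ring]
  linarith
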